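/- ∑_{n≥0} [C(2n,n)/4^n]² · 1/(2n+1) = 4G/π, where G = ∑_{n≥0} (-1)^n/(2n+1)² is Catalan's constant. -/

import Mathlib

/-!
Write `cₙ = C(2n,n) / 4 ^ n`. By Wallis' integral, `cₙ = (2 / π) ∫₀^{π/2} sin^{2n} θ dθ`, so the
series equals `(2 / π) ∫₀^{π/2} ∑ₙ cₙ sin^{2n} θ / (2n + 1) dθ`. Integrating the binomial series
`∑ₙ cₙ x^{2n} = (1 - x²)^{-1/2}` gives `arcsin x = ∑ₙ cₙ x^{2n+1} / (2n + 1)`, so the integrand is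
`arcsin (sin θ) / sin θ = θ / sin θ`. The substitution `θ = 2 arctan t` turns its integral into
`2 ∫₀¹ arctan t / t dt`, and integrating the arctan series termwise gives `2 G`.
-/

open Real Set MeasureTheory

noncomputable def centralBinomRatio (n : ℕ) : ℝ := (n.centralBinom : ℝ) / 4 ^ n

theorem centralBinomRatio_succ (n : ℕ) :
    centralBinomRatio (n + 1) = centralBinomRatio n * ((2 * n + 1) / (2 * n + 2)) := by
  have h : ((n + 1 : ℕ) : ℝ) * (n + 1).centralBinom = 2 * (2 * n + 1) * n.centralBinom := by
    exact_mod_cast Nat.succ_mul_centralBinom_succ n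
  unfold centralBinomRatio
  rw [pow_succ]
  field_simp
  push_cast at h
  linear_combination 2 * h

theorem centralBinomRatio_nonneg (n : ℕ) : 0 ≤ centralBinomRatio n := by
  unfold centralBinomRatio; positivity

theorem centralBinomRatio_eq_prod (n : ℕ) :
    centralBinomRatio n = ∏ i ∈ Finset.range n, (2 * (i : ℝ) + 1) / (2 * i + 2) := by
  induction n with
  | zero => simp [centralBinomRatio]
  | succ n ih => rw [Finset.prod_range_succ, ← ih, centralBinomRatio_succ]

theorem centralBinomRatio_sq_mul_le_one (n : ℕ) : centralBinomRatio n ^ 2 * (2 * n + 1) ≤ 1 := by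
  induction n with
  | zero => simp [centralBinomRatio]
  | succ n ih =>
    have h : ((2 * (n : ℝ) + 1) / (2 * n + 2)) ^ 2 * (2 * (n + 1 : ℕ) + 1) ≤ 2 * n + 1 := by
      push_cast
      rw [div_pow, div_mul_eq_mul_div, div_le_iff₀ (by positivity)]
      nlinarith
    calc centralBinomRatio (n + 1) ^ 2 * (2 * (n + 1 : ℕ) + 1)
        = centralBinomRatio n ^ 2 *
            (((2 * (n : ℝ) + 1) / (2 * n + 2)) ^ 2 * (2 * (n + 1 : ℕ) + 1)) := by
          rw [centralBinomRatio_succ]; ring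
      _ ≤ centralBinomRatio n ^ 2 * (2 * n + 1) := by gcongr
      _ ≤ 1 := ih

theorem multichoose_half_eq_centralBinomRatio (n : ℕ) :
    Ring.multichoose (1 / 2 : ℝ) n = centralBinomRatio n := by
  have h (n : ℕ) :
      (n.factorial : ℝ) * Ring.multichoose (1 / 2 : ℝ) n = (ascPochhammer ℝ n).eval (1 / 2) := by
    rw [← nsmul_eq_mul, Ring.factorial_nsmul_multichoose_eq_ascPochhammer,
      Polynomial.ascPochhammer_smeval_eq_eval]
  induction n with
  | zero => simp [centralBinomRatio]
  | succ n ih =>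
    have h1 := h (n + 1)
    rw [ascPochhammer_succ_eval, ← h n, ih, Nat.factorial_succ] at h1
    rw [centralBinomRatio_succ]
    push_cast at h1
    have : (n.factorial : ℝ) ≠ 0 := by positivity
    field_simp
    apply mul_left_cancel₀ this
    linear_combination 2 * h1

theorem hasSum_centralBinomRatio_mul_pow {x : ℝ} (hx : |x| < 1) :
    HasSum (fun n ↦ centralBinomRatio n * x ^ n) (1 / √(1 - x)) := by
  have hball : x ∈ Metric.eball (0 : ℝ) 1 := by
    rw [Metric.mem_eball, edist_zero_right]
    simpa [enorm_eq_nnnorm, ← NNReal.coe_lt_coe] using hx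
  have h := (Real.one_div_one_sub_rpow_hasFPowerSeriesOnBall_zero (1 / 2)).hasSum hball
  simp only [FormalMultilinearSeries.ofScalars_apply_eq, ← Ring.multichoose_eq,
    multichoose_half_eq_centralBinomRatio, smul_eq_mul, zero_add] at h
  rwa [Real.sqrt_eq_rpow]

theorem integral_sin_pow_even_zero_pi_div_two (n : ℕ) :
    ∫ θ in 0..π / 2, sin θ ^ (2 * n) = π / 2 * centralBinomRatio n := by
  have hcont : Continuous fun θ ↦ sin θ ^ (2 * n) := by fun_prop
  have hsymm : ∫ θ in π / 2..π, sin θ ^ (2 * n) = ∫ θ in 0..π / 2, sin θ ^ (2 * n) := by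
    have h := intervalIntegral.integral_comp_sub_left (a := 0) (b := π / 2)
      (fun θ ↦ sin θ ^ (2 * n)) π
    simp only [sin_pi_sub, sub_zero, sub_half] at h
    exact h.symm
  have hsplit := intervalIntegral.integral_add_adjacent_intervals
    (hcont.intervalIntegrable (μ := volume) 0 (π / 2)) (hcont.intervalIntegrable (π / 2) π)
  rw [hsymm, integral_sin_pow_even, ← centralBinomRatio_eq_prod] at hsplit
  linarith

section TermwiseIntegration

variable {ι : Type*} [Countable ι] {a b : ℝ}

theorem hasSum_intervalIntegral_of_summable_integral_norm {E : Type*} [NormedAddCommGroup E]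
    [NormedSpace ℝ E] {f : ι → ℝ → E} {g : ℝ → E} (hab : a ≤ b)
    (hf : ∀ i, IntervalIntegrable (f i) volume a b)
    (hfg : ∀ x ∈ Ioo a b, HasSum (fun i ↦ f i x) (g x))
    (hs : Summable fun i ↦ ∫ x in a..b, ‖f i x‖) :
    HasSum (fun i ↦ ∫ x in a..b, f i x) (∫ x in a..b, g x) := by
  simp only [intervalIntegral.integral_of_le hab] at hs ⊢
  convert hasSum_integral_of_summable_integral_norm (fun i ↦ (hf i).1) hs using 1
  rw [integral_Ioc_eq_integral_Ioo, integral_Ioc_eq_integral_Ioo]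
  exact setIntegral_congr_fun measurableSet_Ioo fun x hx ↦ (hfg x hx).tsum_eq.symm

theorem hasSum_intervalIntegral_of_nonneg {f : ι → ℝ → ℝ} {g : ℝ → ℝ} (hab : a ≤ b)
    (hf : ∀ i, IntervalIntegrable (f i) volume a b) (hf₀ : ∀ i x, 0 ≤ f i x)
    (hfg : ∀ x ∈ Ioo a b, HasSum (fun i ↦ f i x) (g x))
    (hs : Summable fun i ↦ ∫ x in a..b, f i x) :
    HasSum (fun i ↦ ∫ x in a..b, f i x) (∫ x in a..b, g x) :=
  hasSum_intervalIntegral_of_summable_integral_norm hab hf hfg <| by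
    simpa only [Real.norm_of_nonneg (hf₀ _ _)] using hs

end TermwiseIntegration

theorem integral_one_div_sqrt_one_sub_sq {t : ℝ} (ht : |t| < 1) :
    ∫ u in 0..t, 1 / √(1 - u ^ 2) = arcsin t := by
  have hmem : ∀ u ∈ uIcc 0 t, |u| < 1 := fun u hu ↦ by
    simpa using (abs_sub_left_of_mem_uIcc hu).trans_lt (by simpa using ht)
  have hderiv : ∀ u ∈ uIcc 0 t, HasDerivAt arcsin (1 / √(1 - u ^ 2)) u := fun u hu ↦
    have := abs_lt.mp (hmem u hu)
    hasDerivAt_arcsin (by linarith) (by linarith)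
  have hcont : ContinuousOn (fun u : ℝ ↦ 1 / √(1 - u ^ 2)) (uIcc 0 t) := by
    refine continuousOn_const.div (by fun_prop) fun u hu ↦ ?_
    have := sq_lt_one_iff_abs_lt_one u |>.mpr (hmem u hu)
    positivity
  rw [intervalIntegral.integral_eq_sub_of_hasDerivAt hderiv hcont.intervalIntegrable,
    arcsin_zero, sub_zero]

theorem summable_one_div_two_mul_add_one_sq :
    Summable fun n : ℕ ↦ 1 / (2 * (n : ℝ) + 1) ^ 2 := by
  refine .of_nonneg_of_le (fun n ↦ by positivity) (fun n ↦ ?_)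
    ((summable_nat_add_iff 1).mpr (Real.summable_one_div_nat_pow.mpr one_lt_two))
  push_cast
  gcongr
  linarith [(n.cast_nonneg : (0 : ℝ) ≤ n)]

theorem hasSum_arcsin {t : ℝ} (h₀ : 0 ≤ t) (h₁ : t < 1) :
    HasSum (fun n : ℕ ↦ centralBinomRatio n * t ^ (2 * n + 1) / (2 * n + 1)) (arcsin t) := by
  have hterm (n : ℕ) : ∫ u in 0..t, centralBinomRatio n * u ^ (2 * n) =
      centralBinomRatio n * t ^ (2 * n + 1) / (2 * n + 1) := by
    rw [intervalIntegral.integral_const_mul, integral_pow]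
    push_cast
    ring
  have hgeom {u : ℝ} (hu : |u| < 1) :
      HasSum (fun n ↦ centralBinomRatio n * u ^ (2 * n)) (1 / √(1 - u ^ 2)) := by
    simpa only [pow_mul] using
      hasSum_centralBinomRatio_mul_pow (by rwa [abs_pow, sq_lt_one_iff₀ (abs_nonneg u)])
  have hsum : Summable fun n : ℕ ↦ ∫ u in 0..t, centralBinomRatio n * u ^ (2 * n) := by
    simp_rw [hterm]
    refine .of_nonneg_of_le (fun n ↦ by have := centralBinomRatio_nonneg n; positivity) (fun n ↦ ?_)
      ((hgeom (abs_lt.mpr ⟨by linarith, h₁⟩)).summable.mul_left t)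
    calc centralBinomRatio n * t ^ (2 * n + 1) / (2 * n + 1)
        ≤ centralBinomRatio n * t ^ (2 * n + 1) :=
          div_le_self (mul_nonneg (centralBinomRatio_nonneg n) (by positivity))
            (le_add_of_nonneg_left (by positivity))
      _ = t * (centralBinomRatio n * t ^ (2 * n)) := by ring
  have := hasSum_intervalIntegral_of_nonneg h₀
    (fun n ↦ (by fun_prop : Continuous _).intervalIntegrable _ _)
    (fun n u ↦ mul_nonneg (centralBinomRatio_nonneg n) ((even_two_mul n).pow_nonneg u))
    (fun u hu ↦ hgeom (abs_lt.mpr ⟨by linarith [hu.1], by linarith [hu.2]⟩)) hsum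
  rwa [funext hterm, integral_one_div_sqrt_one_sub_sq (abs_lt.mpr ⟨by linarith, h₁⟩)] at this

theorem hasSum_integral_id_div_sin :
    HasSum (fun n : ℕ ↦ π / 2 * (centralBinomRatio n ^ 2 / (2 * n + 1)))
      (∫ θ in 0..π / 2, θ / sin θ) := by
  have hterm (n : ℕ) : ∫ θ in 0..π / 2, centralBinomRatio n / (2 * n + 1) * sin θ ^ (2 * n) =
      π / 2 * (centralBinomRatio n ^ 2 / (2 * n + 1)) := by
    rw [intervalIntegral.integral_const_mul, integral_sin_pow_even_zero_pi_div_two]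
    ring
  have hpointwise : ∀ θ ∈ Ioo 0 (π / 2),
      HasSum (fun n : ℕ ↦ centralBinomRatio n / (2 * n + 1) * sin θ ^ (2 * n)) (θ / sin θ) := by
    intro θ ⟨hθ₀, hθ₁⟩
    have hsin₀ : 0 < sin θ := sin_pos_of_pos_of_lt_pi hθ₀ (by linarith [pi_pos])
    have hsin₁ : sin θ < 1 := by
      rw [← sin_pi_div_two]
      exact sin_lt_sin_of_lt_of_le_pi_div_two (by linarith) le_rfl hθ₁
    have h := (hasSum_arcsin hsin₀.le hsin₁).div_const (sin θ)
    rw [arcsin_sin (by linarith) hθ₁.le] at h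
    refine h.congr_fun fun n ↦ ?_
    rw [pow_succ]
    field_simp
  have hsum : Summable fun n : ℕ ↦ π / 2 * (centralBinomRatio n ^ 2 / (2 * n + 1)) := by
    refine .mul_left _ (.of_nonneg_of_le (fun n ↦ by positivity) (fun n ↦ ?_)
      summable_one_div_two_mul_add_one_sq)
    rw [div_le_div_iff₀ (by positivity) (by positivity)]
    nlinarith [centralBinomRatio_sq_mul_le_one n]
  have := hasSum_intervalIntegral_of_nonneg (by positivity)
    (fun n ↦ (by fun_prop : Continuous _).intervalIntegrable _ _)
    (fun n θ ↦ mul_nonneg (by have := centralBinomRatio_nonneg n; positivity)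
      ((even_two_mul n).pow_nonneg _)) hpointwise (by simpa only [hterm] using hsum)
  simpa only [hterm] using this

theorem sin_two_mul_arctan (t : ℝ) : sin (2 * arctan t) = 2 * t / (1 + t ^ 2) := by
  have h : √(1 + t ^ 2) ^ 2 = 1 + t ^ 2 := sq_sqrt (by positivity)
  rw [sin_two_mul, sin_arctan, cos_arctan]
  field_simp
  rw [h]

theorem integral_id_div_sin_eq_two_mul_integral_arctan_div :
    ∫ θ in 0..π / 2, θ / sin θ = 2 * ∫ t in 0..1, arctan t / t := by
  have hsubst := intervalIntegral.integral_comp_mul_deriv_of_deriv_nonneg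
    (g := fun θ ↦ θ / sin θ) (f := fun t ↦ 2 * arctan t) (f' := fun t ↦ 2 / (1 + t ^ 2))
    (a := 0) (b := 1) (by fun_prop)
    (fun t _ ↦ ((hasDerivAt_arctan t).const_mul 2).congr_deriv (by ring))
    (fun t _ ↦ by positivity)
  simp only [arctan_zero, arctan_one, mul_zero, Function.comp_apply, sin_two_mul_arctan] at hsubst
  rw [show 2 * (π / 4) = π / 2 by ring] at hsubst
  rw [← hsubst, ← intervalIntegral.integral_const_mul]
  congr 1 with t
  rcases eq_or_ne t 0 with rfl | ht
  · simp
  · field_simp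

theorem hasSum_integral_arctan_div :
    HasSum (fun k : ℕ ↦ (-1) ^ k / (2 * (k : ℝ) + 1) ^ 2) (∫ t in 0..1, arctan t / t) := by
  have hterm (k : ℕ) : ∫ t in 0..1, (-1) ^ k / (2 * (k : ℝ) + 1) * t ^ (2 * k) =
      (-1) ^ k / (2 * (k : ℝ) + 1) ^ 2 := by
    rw [intervalIntegral.integral_const_mul, integral_pow]
    push_cast
    field_simp
    simp
  have hterm_norm (k : ℕ) : ∫ t in 0..1, ‖(-1) ^ k / (2 * (k : ℝ) + 1) * t ^ (2 * k)‖ =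
      1 / (2 * (k : ℝ) + 1) ^ 2 := by
    have h (t : ℝ) : ‖(-1) ^ k / (2 * (k : ℝ) + 1) * t ^ (2 * k)‖ =
        1 / (2 * (k : ℝ) + 1) * t ^ (2 * k) := by
      rw [norm_mul, norm_div, norm_pow, norm_neg, norm_one, one_pow, Real.norm_of_nonneg
        (by positivity : (0 : ℝ) ≤ 2 * k + 1), Real.norm_of_nonneg ((even_two_mul k).pow_nonneg t)]
    simp_rw [h]
    rw [intervalIntegral.integral_const_mul, integral_pow]
    push_cast
    field_simp
    simp
  have hpointwise : ∀ t ∈ Ioo (0 : ℝ) 1,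
      HasSum (fun k : ℕ ↦ (-1) ^ k / (2 * (k : ℝ) + 1) * t ^ (2 * k)) (arctan t / t) := by
    intro t ⟨ht₀, ht₁⟩
    have ht : ‖t‖ < 1 := by rw [Real.norm_eq_abs, abs_lt]; constructor <;> linarith
    have h := (hasSum_arctan ht).div_const t
    refine h.congr_fun fun k ↦ ?_
    push_cast
    rw [pow_succ]
    field_simp
  have := hasSum_intervalIntegral_of_summable_integral_norm zero_le_one
    (fun k ↦ (by fun_prop : Continuous _).intervalIntegrable _ _) hpointwise
    (by simpa only [hterm_norm] using summable_one_div_two_mul_add_one_sq)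
  simpa only [hterm] using this

theorem apery_sq_inv_odd :
    HasSum (fun n : ℕ => ((Nat.choose (2 * n) n : ℝ) / 4 ^ n) ^ 2 * (1 / (2 * (n : ℝ) + 1)))
      (4 * (∑' n : ℕ, (-1) ^ n / (2 * (n : ℝ) + 1) ^ 2) / Real.pi) := by
  rw [hasSum_integral_arctan_div.tsum_eq,
    show ∀ x : ℝ, 4 * x / π = 2 / π * (2 * x) from fun x ↦ by ring,
    ← integral_id_div_sin_eq_two_mul_integral_arctan_div]
  refine (hasSum_integral_id_div_sin.mul_left (2 / π)).congr_fun fun n ↦ ?_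
  simp only [centralBinomRatio, Nat.centralBinom_eq_two_mul_choose]
  field_simp
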